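/- Let f : M → M be a homeomorphism and Y₁,…,Y_L pairwise disjoint wandering subsets that are NOT mutually singular, witnessed by a bound M₀: whenever f^{n_i}(x) ∈ Y_i and f^{n_j}(x) ∈ Y_j with i ≠ j, then |n_i − n_j| ≤ M₀. Fix i ≠ j and let 𝒜_n({i,j}) be the set of coding words of length n using all letters Y₁,…,Y_L in which the letters Y_i and Y_j occur at positions at most M₀ apart. Then the map sending a word w ∈ 𝒜_n({i,j}) to the word w′ obtained by replacing the unique occurrence of Y_i by ∞ lands in 𝒜_n(ℱ, ℱ∖{Y_i}) and is at most 2M₀-to-one; consequently #𝒜_n({i,j}) ≤ 2M₀ · #𝒜_n(ℱ, ℱ∖{Y_i}). -/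

import Mathlib

open Function Metric Set Topology Filter

variable {M : Type*}

/-- Y is a wandering set for f: f^n(Y) ∩ Y = ∅ for all n ≥ 1. -/
def Wandering (f : M → M) (Y : Set M) : Prop :=
  ∀ n : ℕ, 1 ≤ n → f^[n] '' Y ∩ Y = ∅

/-- The non-wandering set Ω(f). -/
def NonwanderingSet [TopologicalSpace M] (f : M → M) : Set M :=
  {x | ∀ U : Set M, IsOpen U → x ∈ U → ∃ n : ℕ, 1 ≤ n ∧ (f^[n] '' U ∩ U).Nonempty}

/-- The word w (with letters in ℱ ∪ {∞}, where `some j` is the letter Y_j and `none`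
is the letter ∞ = complement of ∪ℱ) is a coding of the orbit segment of x. -/
def Codes {L : ℕ} (f : M → M) (Y : Fin L → Set M) {n : ℕ}
    (w : Fin n → Option (Fin L)) (x : M) : Prop :=
  ∀ i : Fin n, (w i).elim (f^[(i : ℕ)] x ∉ ⋃ j, Y j) (fun j => f^[(i : ℕ)] x ∈ Y j)

/-- 𝒜_n(f,ℱ): the set of all codings of all orbit segments of length n. -/
def CodingWords {L : ℕ} (f : M → M) (Y : Fin L → Set M) (n : ℕ) :
    Set (Fin n → Option (Fin L)) :=
  {w | ∃ x : M, Codes f Y w x}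

/-- c_{f,ℱ}(n) = #𝒜_n(f,ℱ). -/
noncomputable def codingCount {L : ℕ} (f : M → M) (Y : Fin L → Set M) (n : ℕ) : ℕ :=
  Nat.card (CodingWords f Y n)

/-- The sets Y₁,…,Y_L are mutually singular: for every N there are a point x and times
t i with f^[t i] x ∈ Y i and |t i − t j| > N for i ≠ j. -/
def MutuallySingular {L : ℕ} (f : M → M) (Y : Fin L → Set M) : Prop :=
  ∀ N : ℕ, ∃ x : M, ∃ t : Fin L → ℕ,
    (∀ i, f^[t i] x ∈ Y i) ∧ ∀ i j, i ≠ j → N < max (t i - t j) (t j - t i)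

/-- E is an (n,ε)-separated set for f. -/
def Separated [MetricSpace M] (f : M → M) (ε : ℝ) (n : ℕ) (E : Set M) : Prop :=
  ∀ x ∈ E, ∀ y ∈ E, x ≠ y → ∃ i : ℕ, i < n ∧ ε ≤ dist (f^[i] x) (f^[i] y)

/-- s_{f,ε}(n): the maximal cardinality of an (n,ε)-separated set. -/
noncomputable def sepCount [MetricSpace M] (f : M → M) (ε : ℝ) (n : ℕ) : ℕ :=
  sSup {k : ℕ | ∃ E : Finset M, Separated f ε n (E : Set M) ∧ E.card = k}

/-- The full orbit of p under the homeomorphism with inverse g. -/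
def FullOrbit (f g : M → M) (p : M) : Set M :=
  {y | ∃ n : ℕ, y = f^[n] p ∨ y = g^[n] p}

/-- The stable set of a set A: points whose forward orbit converges to A. -/
def StableSetOf [MetricSpace M] (f : M → M) (A : Set M) : Set M :=
  {x | Tendsto (fun n => infDist (f^[n] x) A) atTop (nhds 0)}

/-- p is a periodic point of f. -/
def IsPeriodicPoint (f : M → M) (p : M) : Prop := ∃ k : ℕ, 1 ≤ k ∧ f^[k] p = p

/-- The edge relation of the connection graph: p, q are periodic points with distinct
orbits and W^u(θ(p)) ∩ W^s(θ(q)) ≠ ∅. -/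
def Conn [MetricSpace M] (f : M ≃ₜ M) (p q : M) : Prop :=
  IsPeriodicPoint ⇑f p ∧ IsPeriodicPoint ⇑f q ∧
  FullOrbit ⇑f ⇑f.symm p ≠ FullOrbit ⇑f ⇑f.symm q ∧
  (StableSetOf ⇑f.symm (FullOrbit ⇑f ⇑f.symm p) ∩
    StableSetOf ⇑f (FullOrbit ⇑f ⇑f.symm q)).Nonempty

/-- L = L(f) is the length of the longest directed path in the connection graph. -/
def IsMaxPathLength [MetricSpace M] (f : M ≃ₜ M) (L : ℕ) : Prop :=
  (∃ c : Fin (L + 1) → M, ∀ i : Fin L, Conn f (c i.castSucc) (c i.succ)) ∧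
  ∀ m : ℕ, (∃ c : Fin (m + 1) → M, ∀ i : Fin m, Conn f (c i.castSucc) (c i.succ)) → m ≤ L

/-- A topological rendering of the Morse–Smale condition: finite non-wandering set,
all non-wandering points periodic, and the no-tangency consequence of transversality:
if W^u(θ(p)) accumulates on W^s(θ(q)) then it meets it. -/
def MorseSmaleLike [MetricSpace M] (f : M ≃ₜ M) : Prop :=
  (NonwanderingSet ⇑f).Finite ∧
  (∀ x ∈ NonwanderingSet ⇑f, IsPeriodicPoint ⇑f x) ∧
  ∀ p q : M, IsPeriodicPoint ⇑f p → IsPeriodicPoint ⇑f q →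
    (closure (StableSetOf ⇑f.symm (FullOrbit ⇑f ⇑f.symm p)) ∩
      StableSetOf ⇑f (FullOrbit ⇑f ⇑f.symm q)).Nonempty →
    (StableSetOf ⇑f.symm (FullOrbit ⇑f ⇑f.symm p) ∩
      StableSetOf ⇑f (FullOrbit ⇑f ⇑f.symm q)).Nonempty

/-- Coding relative to the subfamily S ⊆ {1,…,L}: letter `some j` (j ∈ S) means the point
lies in Y j, letter `none` (∞) means it lies outside ⋃_{j ∈ S} Y j. -/
def CodesOn {M : Type*} {L : ℕ} (f : M → M) (Y : Fin L → Set M) (S : Set (Fin L)) {n : ℕ}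
    (w : Fin n → Option (Fin L)) (x : M) : Prop :=
  ∀ p : Fin n, (w p).elim (f^[(p : ℕ)] x ∉ ⋃ j ∈ S, Y j)
    (fun j => j ∈ S ∧ f^[(p : ℕ)] x ∈ Y j)

/-- 𝒜_n(ℱ, S): coding words (relative to the subfamily S) whose set of letters is
exactly S ∪ {∞}. -/
def WordsExact {M : Type*} {L : ℕ} (f : M → M) (Y : Fin L → Set M) (S : Set (Fin L)) (n : ℕ) :
    Set (Fin n → Option (Fin L)) :=
  {w | (∃ x : M, CodesOn f Y S w x) ∧ {j : Fin L | ∃ p, w p = some j} = S}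

/-- 𝒜_n({i,j}): coding words using all letters, in which Y_i and Y_j occur at positions
at most M₀ apart. -/
def PairWords {M : Type*} {L : ℕ} (f : M → M) (Y : Fin L → Set M) (M₀ : ℕ) (i j : Fin L)
    (n : ℕ) : Set (Fin n → Option (Fin L)) :=
  {w | w ∈ WordsExact f Y Set.univ n ∧ ∃ p q : Fin n,
    w p = some i ∧ w q = some j ∧ (p : ℕ) ≤ (q : ℕ) + M₀ ∧ (q : ℕ) ≤ (p : ℕ) + M₀}

/-- Replace the occurrences of the letter Y_i by ∞. -/
def replaceLetter {L n : ℕ} (i : Fin L) (w : Fin n → Option (Fin L)) :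
    Fin n → Option (Fin L) :=
  fun p => if w p = some i then none else w p


/-!
Since each `Y k` is wandering, a letter occurs at most once in a coding word, so a word `w` of
`𝒜_n({i,j})` is recovered from `w′ = replaceLetter i w` and the position of the letter `Y_i`.
That position differs from the position of `Y_j`, which `w′` still records, by at most `M₀`
and is not equal to it, leaving at most `2 M₀` choices.
-/

theorem Wandering.eq_of_iterate_mem {f : M → M} {Y : Set M} (h : Wandering f Y) {x : M}
    {a b : ℕ} (ha : f^[a] x ∈ Y) (hb : f^[b] x ∈ Y) : a = b := by
  by_contra hne
  wlog hlt : a < b generalizing a b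
  · exact this hb ha (Ne.symm hne) (by omega)
  have hmem : f^[b] x ∈ f^[b - a] '' Y ∩ Y :=
    ⟨⟨f^[a] x, ha, by rw [← iterate_add_apply, Nat.sub_add_cancel hlt.le]⟩, hb⟩
  simp [h (b - a) (by omega)] at hmem

theorem Set.ncard_le_mul_ncard_of_mapsTo {α β : Type*} {g : α → β} {s : Set α} {t : Set β}
    (hs : s.Finite) (ht : t.Finite) (hg : MapsTo g s t) (k : ℕ)
    (hk : ∀ b ∈ t, {a ∈ s | g a = b}.ncard ≤ k) : s.ncard ≤ k * t.ncard := by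
  classical
  obtain ⟨s, rfl⟩ := hs.exists_finset_coe
  obtain ⟨t, rfl⟩ := ht.exists_finset_coe
  simp only [ncard_coe_finset]
  refine Finset.card_le_mul_card_image_of_maps_to hg k fun b hb => ?_
  rw [← ncard_coe_finset, Finset.coe_filter]
  exact hk b hb

theorem Fin.ncard_punctured_window_le {n : ℕ} (q : Fin n) (m : ℕ) :
    {p : Fin n | p ≠ q ∧ (p : ℕ) ≤ q + m ∧ (q : ℕ) ≤ p + m}.ncard ≤ 2 * m := by
  have hmaps : ∀ p ∈ {p : Fin n | p ≠ q ∧ (p : ℕ) ≤ q + m ∧ (q : ℕ) ≤ p + m},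
      (p : ℕ) ∈ ((Finset.Icc (q - m : ℕ) (q + m)).erase q : Set ℕ) := by
    rintro p ⟨hne, hle, hge⟩
    simp only [Finset.coe_erase, Finset.coe_Icc, Set.mem_sdiff, mem_Icc, mem_singleton_iff]
    exact ⟨⟨by omega, hle⟩, Fin.val_ne_of_ne hne⟩
  calc _ ≤ ((Finset.Icc (q - m : ℕ) (q + m)).erase q : Set ℕ).ncard :=
        ncard_le_ncard_of_injOn _ hmaps Fin.val_injective.injOn
    _ = q + m + 1 - (q - m) - 1 := by
        rw [ncard_coe_finset, Finset.card_erase_of_mem (by simp), Nat.card_Icc]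
    _ ≤ 2 * m := by omega

section Words

variable {L n : ℕ} {f : M → M} {Y : Fin L → Set M} {S : Set (Fin L)}
  {w : Fin n → Option (Fin L)} {x : M} {i : Fin L}

theorem CodesOn.eq_of_eq_some (hx : CodesOn f Y S w x) {k : Fin L} (hk : Wandering f (Y k))
    {a b : Fin n} (ha : w a = some k) (hb : w b = some k) : a = b := by
  have hxa := hx a
  have hxb := hx b
  rw [ha] at hxa
  rw [hb] at hxb
  exact Fin.ext (hk.eq_of_iterate_mem hxa.2 hxb.2)

theorem replaceLetter_of_eq {p : Fin n} (h : w p = some i) : replaceLetter i w p = none :=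
  if_pos h

theorem replaceLetter_of_ne {p : Fin n} (h : w p ≠ some i) : replaceLetter i w p = w p :=
  if_neg h

theorem replaceLetter_eq_some_iff {p : Fin n} {k : Fin L} :
    replaceLetter i w p = some k ↔ w p = some k ∧ k ≠ i := by
  unfold replaceLetter
  split_ifs with h <;> grind

theorem CodesOn.replaceLetter (hdisj : Pairwise fun i j => Disjoint (Y i) (Y j))
    (hx : CodesOn f Y S w x) : CodesOn f Y (S \ {i}) (replaceLetter i w) x := by
  intro p
  by_cases hpi : w p = some i
  · have hxp := hx p
    rw [hpi] at hxp
    rw [replaceLetter_of_eq hpi]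
    simp only [Option.elim_none, mem_iUnion, not_exists]
    exact fun k hk hYk => disjoint_left.mp (hdisj hk.2) hYk hxp.2
  · rw [replaceLetter_of_ne hpi]
    have hxp := hx p
    cases hwp : w p with
    | none =>
      rw [hwp] at hxp
      exact fun hmem => hxp (biUnion_mono sdiff_subset (fun _ _ => subset_rfl) hmem)
    | some k =>
      rw [hwp] at hxp
      exact ⟨⟨hxp.1, fun hk => hpi (hwp.trans (congrArg some hk))⟩, hxp.2⟩

theorem letters_replaceLetter :
    {k | ∃ p, replaceLetter i w p = some k} = {k | ∃ p, w p = some k} \ {i} := by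
  ext k
  simp only [replaceLetter_eq_some_iff, Set.mem_sdiff, mem_ofPred_eq, mem_singleton_iff,
    exists_and_right]

theorem replaceLetter_mem_wordsExact (hdisj : Pairwise fun i j => Disjoint (Y i) (Y j))
    (hw : w ∈ WordsExact f Y S n) : replaceLetter i w ∈ WordsExact f Y (S \ {i}) n := by
  obtain ⟨⟨x, hx⟩, hletters⟩ := hw
  exact ⟨⟨x, hx.replaceLetter hdisj⟩, by rw [letters_replaceLetter, hletters]⟩

theorem update_replaceLetter {p : Fin n} (hp : w p = some i)
    (huniq : ∀ r, w r = some i → r = p) : update (replaceLetter i w) p (some i) = w := by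
  funext r
  rcases eq_or_ne r p with rfl | hr
  · rw [update_self, hp]
  · rw [update_of_ne hr, replaceLetter_of_ne fun h => hr (huniq r h)]

end Words

section PairWords

variable {L n M₀ : ℕ} {f : M → M} {Y : Fin L → Set M} {i j : Fin L}

theorem PairWords.fibre_subset_image (hi : Wandering f (Y i)) (hj : Wandering f (Y j))
    (hij : i ≠ j) {w' : Fin n → Option (Fin L)} {q : Fin n} (hq : w' q = some j) :
    {w ∈ PairWords f Y M₀ i j n | replaceLetter i w = w'} ⊆
      (fun p => update w' p (some i)) '' {p | p ≠ q ∧ (p : ℕ) ≤ q + M₀ ∧ (q : ℕ) ≤ p + M₀} := by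
  rintro w ⟨⟨⟨⟨x, hx⟩, -⟩, p, q', hp, hq', hpq', hq'p⟩, rfl⟩
  have hwq : w q = some j := (replaceLetter_eq_some_iff.1 hq).1
  rw [hx.eq_of_eq_some hj hq' hwq] at hpq' hq'p
  have hpq : p ≠ q := fun h => hij (Option.some_injective _ (hp.symm.trans (h ▸ hwq)))
  exact ⟨p, ⟨hpq, hpq', hq'p⟩,
    update_replaceLetter hp fun r hr => hx.eq_of_eq_some hi hr hp⟩

theorem PairWords.ncard_fibre_le (hi : Wandering f (Y i)) (hj : Wandering f (Y j))
    (hij : i ≠ j) (w' : Fin n → Option (Fin L)) :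
    {w ∈ PairWords f Y M₀ i j n | replaceLetter i w = w'}.ncard ≤ 2 * M₀ := by
  rcases eq_empty_or_nonempty {w ∈ PairWords f Y M₀ i j n | replaceLetter i w = w'} with
    hempty | ⟨w, ⟨-, p, q, -, hq, -⟩, rfl⟩
  · simp [hempty]
  have hq' : replaceLetter i w q = some j := replaceLetter_eq_some_iff.2 ⟨hq, hij.symm⟩
  calc _ ≤ _ := ncard_le_ncard (fibre_subset_image hi hj hij hq')
    _ ≤ _ := ncard_image_le (toFinite _)
    _ ≤ 2 * M₀ := Fin.ncard_punctured_window_le q M₀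

end PairWords

theorem pair_words_card_le_general {M : Type*} [MetricSpace M] (f : M ≃ₜ M)
    {L : ℕ} (Y : Fin L → Set M)
    (hdisj : Pairwise fun i j => Disjoint (Y i) (Y j))
    (hwand : ∀ i, Wandering ⇑f (Y i))
    (M₀ : ℕ)
    (i j : Fin L) (hij : i ≠ j) (n : ℕ) :
    (∀ w ∈ PairWords ⇑f Y M₀ i j n, replaceLetter i w ∈ WordsExact ⇑f Y ({i}ᶜ) n) ∧
    (∀ w' : Fin n → Option (Fin L),
      Nat.card {w ∈ PairWords ⇑f Y M₀ i j n | replaceLetter i w = w'} ≤ 2 * M₀) ∧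
    Nat.card (PairWords ⇑f Y M₀ i j n) ≤ 2 * M₀ * Nat.card (WordsExact ⇑f Y ({i}ᶜ) n) := by
  have hmaps : ∀ w ∈ PairWords ⇑f Y M₀ i j n, replaceLetter i w ∈ WordsExact ⇑f Y ({i}ᶜ) n :=
    fun w hw => compl_eq_univ_sdiff ({i} : Set (Fin L)) ▸ replaceLetter_mem_wordsExact hdisj hw.1
  have hfibre : ∀ w' : Fin n → Option (Fin L),
      {w ∈ PairWords ⇑f Y M₀ i j n | replaceLetter i w = w'}.ncard ≤ 2 * M₀ :=
    PairWords.ncard_fibre_le (hwand i) (hwand j) hij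
  simp only [Nat.card_coe_set_eq]
  exact ⟨hmaps, hfibre,
    ncard_le_mul_ncard_of_mapsTo (toFinite _) (toFinite _) hmaps _ fun w' _ => hfibre w'⟩

/-- for pairwise disjoint wandering sets that fail to be mutually singular
with bound M₀, the map w ↦ w′ replacing the unique occurrence of Y_i by ∞ sends
𝒜_n({i,j}) into 𝒜_n(ℱ, ℱ∖{Y_i}), is at most 2M₀-to-one, and consequently
#𝒜_n({i,j}) ≤ 2M₀ · #𝒜_n(ℱ, ℱ∖{Y_i}). -/
theorem pair_words_card_le {M : Type*} [MetricSpace M] [CompactSpace M] (f : M ≃ₜ M)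
    {L : ℕ} (Y : Fin L → Set M)
    (hdisj : Pairwise fun i j => Disjoint (Y i) (Y j))
    (hwand : ∀ i, Wandering ⇑f (Y i))
    (M₀ : ℕ)
    (hM₀ : ∀ x : M, ∀ i j : Fin L, i ≠ j → ∀ ni nj : ℕ,
      (⇑f)^[ni] x ∈ Y i → (⇑f)^[nj] x ∈ Y j → ni ≤ nj + M₀ ∧ nj ≤ ni + M₀)
    (i j : Fin L) (hij : i ≠ j) (n : ℕ) :
    (∀ w ∈ PairWords ⇑f Y M₀ i j n, replaceLetter i w ∈ WordsExact ⇑f Y ({i}ᶜ) n) ∧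
    (∀ w' : Fin n → Option (Fin L),
      Nat.card {w ∈ PairWords ⇑f Y M₀ i j n | replaceLetter i w = w'} ≤ 2 * M₀) ∧
    Nat.card (PairWords ⇑f Y M₀ i j n) ≤ 2 * M₀ * Nat.card (WordsExact ⇑f Y ({i}ᶜ) n) :=
  pair_words_card_le_general f Y hdisj hwand M₀ i j hij n
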